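/- Let δ = 0 or 1/2, λ ∈ ℂ*, a, b ∈ ℂ, and fix √λ ∈ ℂ* with (√λ)² = λ, setting λ^r = λ^{r-1/2}√λ for r ∈ 1/2+ℤ. Then each of the four prescribed actions makes Ω_{S(δ)}(λ,a,b), Ω'_{S(δ)}(λ,a,b), Ω''_{S(δ)}(λ,b), and Ω̃''_{S(δ)}(λ,b) into an S(δ)-module; that is, all the defining bracket relations of S(δ) hold for these actions. -/
import Mathlib


noncomputable section

open Polynomial in
/-- The shift operator `f(x) ↦ f(x + t)` on `ℂ[x]`. -/
def shL (t : ℂ) : Polynomial ℂ →ₗ[ℂ] Polynomial ℂ where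
  toFun f := f.comp (Polynomial.X + Polynomial.C t)
  map_add' f g := Polynomial.add_comp
  map_smul' c f := by simp [Polynomial.smul_comp]

/-- Multiplication by a fixed polynomial, as a linear operator on `ℂ[x]`. -/
def mulL (p : Polynomial ℂ) : Polynomial ℂ →ₗ[ℂ] Polynomial ℂ := LinearMap.mulLeft ℂ p

/-- The underlying space `ℂ[x₀] ⊕ ℂ[x₁]` of the modules `Ω` (first factor even, second
factor odd). -/
abbrev P2 := Polynomial ℂ × Polynomial ℂ

/-- A diagonal (parity-preserving) operator on `ℂ[x₀] ⊕ ℂ[x₁]`. -/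
def dg (A B : Polynomial ℂ →ₗ[ℂ] Polynomial ℂ) : P2 →ₗ[ℂ] P2 := A.prodMap B

/-- The (parity-reversing) operator `(f(x₀), g(x₁)) ↦ (0, C f)` on `ℂ[x₀] ⊕ ℂ[x₁]`:
the shape of the action of the odd elements `ψ_r`. -/
def offPsi (C : Polynomial ℂ →ₗ[ℂ] Polynomial ℂ) : P2 →ₗ[ℂ] P2 :=
  (LinearMap.inr ℂ (Polynomial ℂ) (Polynomial ℂ)) ∘ₗ C ∘ₗ
    (LinearMap.fst ℂ (Polynomial ℂ) (Polynomial ℂ))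

/-- The index `r = n + δ ∈ ℤ + δ`, as a complex number. -/
def rIdx (δ : ℚ) (n : ℤ) : ℂ := (n : ℂ) + ((δ : ℚ) : ℂ)

/-- `λ^r` for `r = n + δ`: equal to `λ^n` if `δ = 0` and to `λ^{r-1/2}·√λ = λ^n·√λ`
if `δ = 1/2`. -/
def lamPow (δ : ℚ) (lam slam : ℂ) (n : ℤ) : ℂ :=
  if δ = 0 then lam ^ n else lam ^ n * slam

open Polynomial in
/-- The action of `L_m` on `Ω_{S(δ)}(λ,a,b) = ℂ[x₀] ⊕ ℂ[x₁]`. -/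
def OmL (lam a : ℂ) (m : ℤ) : P2 →ₗ[ℂ] P2 :=
  dg ((lam ^ m) • (mulL (X + C ((m : ℂ) * a)) ∘ₗ shL (m : ℂ)))
     ((lam ^ m) • (mulL (X + C (-(m : ℂ) / 2 + (m : ℂ) * a)) ∘ₗ shL (m : ℂ)))

/-- The action of `ψ_r`, `r = n + δ`, on `Ω_{S(δ)}(λ,a,b)`:
`ψ_r·f(x₀) = bλ^r f(x₁+r)`, `ψ_r·g(x₁) = 0`. -/
def OmPsi (δ : ℚ) (lam slam b : ℂ) (n : ℤ) : P2 →ₗ[ℂ] P2 :=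
  offPsi ((b * lamPow δ lam slam n) • shL (rIdx δ n))

open Polynomial in
/-- The action of `L_m` on `Ω'_{S(δ)}(λ,a,b) = ℂ[y₀] ⊕ ℂ[y₁]`. -/
def Om'L (lam a : ℂ) (m : ℤ) : P2 →ₗ[ℂ] P2 :=
  dg ((lam ^ m) • (mulL (X + C ((m : ℂ) * a)) ∘ₗ shL (m : ℂ)))
     ((lam ^ m) • (mulL (X + C (-(3 * (m : ℂ)) / 2 + (m : ℂ) * a)) ∘ₗ shL (m : ℂ)))

open Polynomial in
/-- The action of `ψ_r`, `r = n + δ`, on `Ω'_{S(δ)}(λ,a,b)`: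
`ψ_r·f(y₀) = bλ^r (y₁ - 2ra + 3r) f(y₁+r)`, `ψ_r·g(y₁) = 0`. -/
def Om'Psi (δ : ℚ) (lam slam a b : ℂ) (n : ℤ) : P2 →ₗ[ℂ] P2 :=
  offPsi ((b * lamPow δ lam slam n) •
    (mulL (X + C (-2 * rIdx δ n * a + 3 * rIdx δ n)) ∘ₗ shL (rIdx δ n)))

open Polynomial in
/-- The action of `L_m` on `Ω''_{S(δ)}(λ,b) = ℂ[z₀] ⊕ ℂ[z₁]`. -/
def Om''L (lam : ℂ) (m : ℤ) : P2 →ₗ[ℂ] P2 :=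
  dg ((lam ^ m) • (mulL (X + C (m : ℂ)) ∘ₗ shL (m : ℂ)))
     ((lam ^ m) • (mulL (X + C (-(3 * (m : ℂ)) / 2)) ∘ₗ shL (m : ℂ)))

open Polynomial in
/-- The action of `ψ_r`, `r = n + δ`, on `Ω''_{S(δ)}(λ,b)`:
`ψ_r·f(z₀) = bλ^r (z₁ + 3r)(z₁ + r) f(z₁+r)`, `ψ_r·g(z₁) = 0`. -/
def Om''Psi (δ : ℚ) (lam slam b : ℂ) (n : ℤ) : P2 →ₗ[ℂ] P2 :=
  offPsi ((b * lamPow δ lam slam n) •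
    (mulL ((X + C (3 * rIdx δ n)) * (X + C (rIdx δ n))) ∘ₗ shL (rIdx δ n)))

open Polynomial in
/-- The action of `L_m` on `Ω̃''_{S(δ)}(λ,b) = ℂ[z̃₀] ⊕ ℂ[z̃₁]`. -/
def Omt''L (lam : ℂ) (m : ℤ) : P2 →ₗ[ℂ] P2 :=
  dg ((lam ^ m) • (mulL (X + C (5 * (m : ℂ) / 2)) ∘ₗ shL (m : ℂ)))
     ((lam ^ m) • (mulL X ∘ₗ shL (m : ℂ)))

open Polynomial in
/-- The action of `ψ_r`, `r = n + δ`, on `Ω̃''_{S(δ)}(λ,b)`: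
`ψ_r·f(z̃₀) = bλ^r z̃₁(z̃₁ - 2r) f(z̃₁+r)`, `ψ_r·g(z̃₁) = 0`. -/
def Omt''Psi (δ : ℚ) (lam slam b : ℂ) (n : ℤ) : P2 →ₗ[ℂ] P2 :=
  offPsi ((b * lamPow δ lam slam n) •
    (mulL (X * (X - C (2 * rIdx δ n))) ∘ₗ shL (rIdx δ n)))

/-- The Virasoro relations `[L_m, L_n] = (m-n)L_{m+n}` (with `c` acting as `0`). -/
def IsVirActionC0 (L : ℤ → P2 →ₗ[ℂ] P2) : Prop :=
  ∀ m n : ℤ, L m ∘ₗ L n - L n ∘ₗ L m = ((m : ℂ) - (n : ℂ)) • L (m + n)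

/-- The mixed relations `[L_m, ψ_r] = (-r - m/2) ψ_{m+r}`, `r = n + δ ∈ ℤ + δ`. -/
def IsLPsiAction (δ : ℚ) (L ψ : ℤ → P2 →ₗ[ℂ] P2) : Prop :=
  ∀ m n : ℤ, L m ∘ₗ ψ n - ψ n ∘ₗ L m = (-(rIdx δ n) - (m : ℂ) / 2) • ψ (m + n)

/-- The Fermion relations `[ψ_r, ψ_s] = δ_{r,-s} z` (with `z` acting as `0`). -/
def IsPsiPsiActionZ0 (ψ : ℤ → P2 →ₗ[ℂ] P2) : Prop :=
  ∀ m n : ℤ, ψ m ∘ₗ ψ n + ψ n ∘ₗ ψ m = 0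

set_option maxHeartbeats 1000000 in
private lemma aux_0_0 (δ : ℚ) (hδ : δ = 0 ∨ δ = 1/2) (lam slam : ℂ) (hlam : lam ≠ 0)
    (a b : ℂ) : IsVirActionC0 (OmL lam a) := by
  rcases hδ with h | h <;> subst h <;>
  · intro m n
    apply LinearMap.ext
    rintro ⟨f, g⟩
    refine Prod.ext ?_ ?_ <;>
    · apply Polynomial.funext
      intro x
      simp [OmL, OmPsi, dg, offPsi,
        mulL, shL, lamPow, rIdx, Polynomial.eval_comp, smul_smul, zpow_add₀ hlam]
      try push_cast
      try ring

set_option maxHeartbeats 1000000 in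
private lemma aux_0_1 (δ : ℚ) (hδ : δ = 0 ∨ δ = 1/2) (lam slam : ℂ) (hlam : lam ≠ 0)
    (a b : ℂ) : IsLPsiAction δ (OmL lam a) (OmPsi δ lam slam b) := by
  rcases hδ with h | h <;> subst h <;>
  · intro m n
    apply LinearMap.ext
    rintro ⟨f, g⟩
    refine Prod.ext ?_ ?_ <;>
    · apply Polynomial.funext
      intro x
      simp [OmL, OmPsi, dg, offPsi,
        mulL, shL, lamPow, rIdx, Polynomial.eval_comp, smul_smul, zpow_add₀ hlam]
      try push_cast
      try ring

set_option maxHeartbeats 1000000 in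
private lemma aux_0_2 (δ : ℚ) (hδ : δ = 0 ∨ δ = 1/2) (lam slam : ℂ) (hlam : lam ≠ 0)
    (a b : ℂ) : IsPsiPsiActionZ0 (OmPsi δ lam slam b) := by
  rcases hδ with h | h <;> subst h <;>
  · intro m n
    apply LinearMap.ext
    rintro ⟨f, g⟩
    refine Prod.ext ?_ ?_ <;>
    · apply Polynomial.funext
      intro x
      simp [OmL, OmPsi, dg, offPsi,
        mulL, shL, lamPow, rIdx, Polynomial.eval_comp, smul_smul, zpow_add₀ hlam]
      try push_cast
      try ring

set_option maxHeartbeats 1000000 in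
private lemma aux_1_0 (δ : ℚ) (hδ : δ = 0 ∨ δ = 1/2) (lam slam : ℂ) (hlam : lam ≠ 0)
    (a b : ℂ) : IsVirActionC0 (Om'L lam a) := by
  rcases hδ with h | h <;> subst h <;>
  · intro m n
    apply LinearMap.ext
    rintro ⟨f, g⟩
    refine Prod.ext ?_ ?_ <;>
    · apply Polynomial.funext
      intro x
      simp [Om'L, Om'Psi, dg, offPsi,
        mulL, shL, lamPow, rIdx, Polynomial.eval_comp, smul_smul, zpow_add₀ hlam]
      try push_cast
      try ring

set_option maxHeartbeats 1000000 in
private lemma aux_1_1 (δ : ℚ) (hδ : δ = 0 ∨ δ = 1/2) (lam slam : ℂ) (hlam : lam ≠ 0)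
    (a b : ℂ) : IsLPsiAction δ (Om'L lam a) (Om'Psi δ lam slam a b) := by
  rcases hδ with h | h <;> subst h <;>
  · intro m n
    apply LinearMap.ext
    rintro ⟨f, g⟩
    refine Prod.ext ?_ ?_ <;>
    · apply Polynomial.funext
      intro x
      simp [Om'L, Om'Psi, dg, offPsi,
        mulL, shL, lamPow, rIdx, Polynomial.eval_comp, smul_smul, zpow_add₀ hlam]
      try push_cast
      try ring

set_option maxHeartbeats 1000000 in
private lemma aux_1_2 (δ : ℚ) (hδ : δ = 0 ∨ δ = 1/2) (lam slam : ℂ) (hlam : lam ≠ 0)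
    (a b : ℂ) : IsPsiPsiActionZ0 (Om'Psi δ lam slam a b) := by
  rcases hδ with h | h <;> subst h <;>
  · intro m n
    apply LinearMap.ext
    rintro ⟨f, g⟩
    refine Prod.ext ?_ ?_ <;>
    · apply Polynomial.funext
      intro x
      simp [Om'L, Om'Psi, dg, offPsi,
        mulL, shL, lamPow, rIdx, Polynomial.eval_comp, smul_smul, zpow_add₀ hlam]
      try push_cast
      try ring

set_option maxHeartbeats 1000000 in
private lemma aux_2_0 (δ : ℚ) (hδ : δ = 0 ∨ δ = 1/2) (lam slam : ℂ) (hlam : lam ≠ 0)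
    (a b : ℂ) : IsVirActionC0 (Om''L lam) := by
  rcases hδ with h | h <;> subst h <;>
  · intro m n
    apply LinearMap.ext
    rintro ⟨f, g⟩
    refine Prod.ext ?_ ?_ <;>
    · apply Polynomial.funext
      intro x
      simp [Om''L, Om''Psi, dg, offPsi,
        mulL, shL, lamPow, rIdx, Polynomial.eval_comp, smul_smul, zpow_add₀ hlam]
      try push_cast
      try ring

set_option maxHeartbeats 1000000 in
private lemma aux_2_1 (δ : ℚ) (hδ : δ = 0 ∨ δ = 1/2) (lam slam : ℂ) (hlam : lam ≠ 0)
    (a b : ℂ) : IsLPsiAction δ (Om''L lam) (Om''Psi δ lam slam b) := by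
  rcases hδ with h | h <;> subst h <;>
  · intro m n
    apply LinearMap.ext
    rintro ⟨f, g⟩
    refine Prod.ext ?_ ?_ <;>
    · apply Polynomial.funext
      intro x
      simp [Om''L, Om''Psi, dg, offPsi,
        mulL, shL, lamPow, rIdx, Polynomial.eval_comp, smul_smul, zpow_add₀ hlam]
      try push_cast
      try ring

set_option maxHeartbeats 1000000 in
private lemma aux_2_2 (δ : ℚ) (hδ : δ = 0 ∨ δ = 1/2) (lam slam : ℂ) (hlam : lam ≠ 0)
    (a b : ℂ) : IsPsiPsiActionZ0 (Om''Psi δ lam slam b) := by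
  rcases hδ with h | h <;> subst h <;>
  · intro m n
    apply LinearMap.ext
    rintro ⟨f, g⟩
    refine Prod.ext ?_ ?_ <;>
    · apply Polynomial.funext
      intro x
      simp [Om''L, Om''Psi, dg, offPsi,
        mulL, shL, lamPow, rIdx, Polynomial.eval_comp, smul_smul, zpow_add₀ hlam]
      try push_cast
      try ring

set_option maxHeartbeats 1000000 in
private lemma aux_3_0 (δ : ℚ) (hδ : δ = 0 ∨ δ = 1/2) (lam slam : ℂ) (hlam : lam ≠ 0)
    (a b : ℂ) : IsVirActionC0 (Omt''L lam) := by
  rcases hδ with h | h <;> subst h <;>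
  · intro m n
    apply LinearMap.ext
    rintro ⟨f, g⟩
    refine Prod.ext ?_ ?_ <;>
    · apply Polynomial.funext
      intro x
      simp [Omt''L, Omt''Psi, dg, offPsi,
        mulL, shL, lamPow, rIdx, Polynomial.eval_comp, smul_smul, zpow_add₀ hlam]
      try push_cast
      try ring

set_option maxHeartbeats 1000000 in
private lemma aux_3_1 (δ : ℚ) (hδ : δ = 0 ∨ δ = 1/2) (lam slam : ℂ) (hlam : lam ≠ 0)
    (a b : ℂ) : IsLPsiAction δ (Omt''L lam) (Omt''Psi δ lam slam b) := by
  rcases hδ with h | h <;> subst h <;>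
  · intro m n
    apply LinearMap.ext
    rintro ⟨f, g⟩
    refine Prod.ext ?_ ?_ <;>
    · apply Polynomial.funext
      intro x
      simp [Omt''L, Omt''Psi, dg, offPsi,
        mulL, shL, lamPow, rIdx, Polynomial.eval_comp, smul_smul, zpow_add₀ hlam]
      try push_cast
      try ring

set_option maxHeartbeats 1000000 in
private lemma aux_3_2 (δ : ℚ) (hδ : δ = 0 ∨ δ = 1/2) (lam slam : ℂ) (hlam : lam ≠ 0)
    (a b : ℂ) : IsPsiPsiActionZ0 (Omt''Psi δ lam slam b) := by
  rcases hδ with h | h <;> subst h <;>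
  · intro m n
    apply LinearMap.ext
    rintro ⟨f, g⟩
    refine Prod.ext ?_ ?_ <;>
    · apply Polynomial.funext
      intro x
      simp [Omt''L, Omt''Psi, dg, offPsi,
        mulL, shL, lamPow, rIdx, Polynomial.eval_comp, smul_smul, zpow_add₀ hlam]
      try push_cast
      try ring

/-- **Statement 18** (Lemma 6.2).  For `δ = 0` or `1/2`, `λ ∈ ℂ*`, a fixed square root
`√λ ∈ ℂ*` of `λ`, and `a, b ∈ ℂ`, the prescribed actions (with `c = z = 0`) make each of
`Ω_{S(δ)}(λ,a,b)`, `Ω'_{S(δ)}(λ,a,b)`, `Ω''_{S(δ)}(λ,b)` and `Ω̃''_{S(δ)}(λ,b)` into an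
`S(δ)`-module, i.e. all the defining bracket relations of `S(δ)` hold. -/
theorem statement18 (δ : ℚ) (hδ : δ = 0 ∨ δ = 1/2) (lam slam : ℂ) (hlam : lam ≠ 0)
    (hslam : slam ≠ 0) (hsq : slam ^ 2 = lam) (a b : ℂ) :
    (IsVirActionC0 (OmL lam a) ∧
      IsLPsiAction δ (OmL lam a) (OmPsi δ lam slam b) ∧
      IsPsiPsiActionZ0 (OmPsi δ lam slam b)) ∧
    (IsVirActionC0 (Om'L lam a) ∧
      IsLPsiAction δ (Om'L lam a) (Om'Psi δ lam slam a b) ∧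
      IsPsiPsiActionZ0 (Om'Psi δ lam slam a b)) ∧
    (IsVirActionC0 (Om''L lam) ∧
      IsLPsiAction δ (Om''L lam) (Om''Psi δ lam slam b) ∧
      IsPsiPsiActionZ0 (Om''Psi δ lam slam b)) ∧
    (IsVirActionC0 (Omt''L lam) ∧
      IsLPsiAction δ (Omt''L lam) (Omt''Psi δ lam slam b) ∧
      IsPsiPsiActionZ0 (Omt''Psi δ lam slam b)) := by
  exact ⟨⟨aux_0_0 δ hδ lam slam hlam a b, aux_0_1 δ hδ lam slam hlam a b, aux_0_2 δ hδ lam slam hlam a b⟩,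
    ⟨aux_1_0 δ hδ lam slam hlam a b, aux_1_1 δ hδ lam slam hlam a b, aux_1_2 δ hδ lam slam hlam a b⟩,
    ⟨aux_2_0 δ hδ lam slam hlam a b, aux_2_1 δ hδ lam slam hlam a b, aux_2_2 δ hδ lam slam hlam a b⟩,
    ⟨aux_3_0 δ hδ lam slam hlam a b, aux_3_1 δ hδ lam slam hlam a b, aux_3_2 δ hδ lam slam hlam a b⟩⟩

end
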